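/- arXiv:2011.08497 — 3 statements merged into one kernel-verified Lean document; each statement's English description precedes it below -/
import Mathlib

section
/- Let G be a graph on [n] and H an induced subgraph of G on vertex set V(H). Then the parity binomial edge ideal satisfies I_H = I_G ∩ S_H, where I_H is taken in the subring S_H = K[x_k, y_k : k ∈ V(H)]. -/
open MvPolynomial

noncomputable section

/-- Parity binomial edge ideal. -/
def pbei {V : Type} (K : Type) [Field K] (G : SimpleGraph V) :
    Ideal (MvPolynomial (V ⊕ V) K) :=
  Ideal.span {f | ∃ i j, G.Adj i j ∧
    f = X (Sum.inl i) * X (Sum.inl j) - X (Sum.inr i) * X (Sum.inr j)}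

/-- For an induced subgraph `H = G[A]`, the parity binomial edge ideal of `H`
equals the contraction of the parity binomial edge ideal of `G` along the inclusion
`S_H = K[x_k, y_k : k ∈ A] ↪ S`, i.e. `I_H = I_G ∩ S_H`. -/
theorem stmt4 {n : ℕ} (K : Type) [Field K] (G : SimpleGraph (Fin n)) (A : Set (Fin n)) :
    Ideal.comap
      (rename (Sum.map (Subtype.val : A → Fin n) (Subtype.val : A → Fin n)) :
        MvPolynomial (↥A ⊕ ↥A) K →ₐ[K] MvPolynomial (Fin n ⊕ Fin n) K)
      (pbei K G)
      = pbei K (SimpleGraph.induce A G) := by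
  classical
  set ι : MvPolynomial (↥A ⊕ ↥A) K →ₐ[K] MvPolynomial (Fin n ⊕ Fin n) K :=
    rename (Sum.map Subtype.val Subtype.val) with hι
  let d : Fin n → MvPolynomial (↥A ⊕ ↥A) K :=
    fun i => if h : i ∈ A then X (Sum.inl ⟨i, h⟩) else 0
  let e : Fin n → MvPolynomial (↥A ⊕ ↥A) K :=
    fun i => if h : i ∈ A then X (Sum.inr ⟨i, h⟩) else 0
  let π : MvPolynomial (Fin n ⊕ Fin n) K →ₐ[K] MvPolynomial (↥A ⊕ ↥A) K :=
    aeval (Sum.elim d e)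
  have hπι : ∀ f : MvPolynomial (↥A ⊕ ↥A) K, π (ι f) = f := by
    intro f
    show aeval (Sum.elim d e) (rename (Sum.map Subtype.val Subtype.val) f) = f
    rw [aeval_rename]
    have : (Sum.elim d e) ∘ (Sum.map Subtype.val Subtype.val) = X := by
      funext v
      rcases v with a | a
      · simp [d, a.prop]
      · simp [e, a.prop]
    rw [this, aeval_X_left, AlgHom.id_apply]
  have hπ : (pbei K G).map π ≤ pbei K (SimpleGraph.induce A G) := by
    rw [pbei, Ideal.map_span, Ideal.span_le]
    rintro g ⟨f, ⟨i, j, hadj, rfl⟩, rfl⟩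
    simp only [map_sub, map_mul, aeval_X, Sum.elim_inl, Sum.elim_inr, π]
    by_cases hi : i ∈ A
    · by_cases hj : j ∈ A
      · simp only [d, e, dif_pos hi, dif_pos hj]
        exact Ideal.subset_span ⟨⟨i, hi⟩, ⟨j, hj⟩, hadj, rfl⟩
      · simp [d, e, dif_neg hj]
    · simp [d, e, dif_neg hi]
  apply le_antisymm
  · intro f hf
    have : π (ι f) ∈ (pbei K G).map π := Ideal.mem_map_of_mem π hf
    rw [hπι] at this
    exact hπ this
  · rw [pbei, Ideal.span_le]
    rintro g ⟨i, j, hadj, rfl⟩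
    refine Ideal.subset_span ⟨(i : Fin n), (j : Fin n), ?_, ?_⟩
    · exact hadj
    · simp [hι]
end
end

section
/- Let G be a graph on [n] and H an induced subgraph of G. Then S_H/I_H is an algebra retract of S/I_G; more precisely, the inclusion S_H/I_H ↪ S/I_G composed with the projection S/I_G → S_H/I_H (induced by setting x_i = y_i = 0 for i ∉ V(H)) is the identity on S_H/I_H. -/
open MvPolynomial

noncomputable section

/-- For an induced subgraph `H = G[A]`, `S_H/I_H` is an algebra retract of
`S/I_G`: the inclusion `ι` maps `I_H` into `I_G`, the projection `p` (setting
`x_i = y_i = 0` for `i ∉ A`) maps `I_G` into `I_H`, and the composition of the induced maps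
`S_H/I_H → S/I_G → S_H/I_H` is the identity. -/
theorem stmt5 {n : ℕ} (K : Type) [Field K] (G : SimpleGraph (Fin n)) (A : Set (Fin n))
    (ι : MvPolynomial (↥A ⊕ ↥A) K →ₐ[K] MvPolynomial (Fin n ⊕ Fin n) K)
    (hι : ι = rename (Sum.map (Subtype.val : A → Fin n) (Subtype.val : A → Fin n)))
    (p : MvPolynomial (Fin n ⊕ Fin n) K →ₐ[K] MvPolynomial (↥A ⊕ ↥A) K)
    (hp1 : ∀ i (h : i ∈ A), p (X (Sum.inl i)) = X (Sum.inl ⟨i, h⟩)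
      ∧ p (X (Sum.inr i)) = X (Sum.inr ⟨i, h⟩))
    (hp2 : ∀ i, i ∉ A → p (X (Sum.inl i)) = 0 ∧ p (X (Sum.inr i)) = 0) :
    pbei K (SimpleGraph.induce A G) ≤ Ideal.comap ι (pbei K G) ∧
    pbei K G ≤ Ideal.comap p (pbei K (SimpleGraph.induce A G)) ∧
    (∀ y : MvPolynomial (↥A ⊕ ↥A) K, p (ι y) = y) ∧
    (∀ y : MvPolynomial (↥A ⊕ ↥A) K,
      Ideal.Quotient.mk (pbei K (SimpleGraph.induce A G)) (p (ι y)) =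
        Ideal.Quotient.mk (pbei K (SimpleGraph.induce A G)) y) := by
  have hpι : ∀ y : MvPolynomial (↥A ⊕ ↥A) K, p (ι y) = y := by
    intro y
    have : (p.comp ι) y = (AlgHom.id K _) y := by
      congr 1
      apply MvPolynomial.algHom_ext
      rintro (a | a) <;>
        simp [hι, (hp1 a.1 a.2).1, (hp1 a.1 a.2).2]
    simpa using this
  refine ⟨?_, ?_, hpι, fun y => by rw [hpι]⟩
  · rw [pbei, Ideal.span_le]
    rintro f ⟨i, j, hadj, rfl⟩
    simp only [Ideal.mem_comap, SetLike.mem_coe, map_sub, map_mul, hι, rename_X]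
    apply Ideal.subset_span
    exact ⟨i.1, j.1, hadj, by simp⟩
  · rw [pbei, Ideal.span_le]
    rintro f ⟨i, j, hadj, rfl⟩
    simp only [Ideal.mem_comap, SetLike.mem_coe, map_sub, map_mul]
    by_cases hi : i ∈ A
    · by_cases hj : j ∈ A
      · rw [(hp1 i hi).1, (hp1 j hj).1, (hp1 i hi).2, (hp1 j hj).2]
        exact Ideal.subset_span ⟨⟨i, hi⟩, ⟨j, hj⟩, hadj, rfl⟩
      · rw [(hp2 j hj).1, (hp2 j hj).2]; simp
    · rw [(hp2 i hi).1, (hp2 i hi).2]; simp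
end
end

section
/- Let G be a non-bipartite graph on [n] and e = {u,v} ∈ E(G) an edge such that G∖e is bipartite. Then (I_{G∖e} : (x_u x_v − y_u y_v)) = I_{G∖e} + (x_i y_j − x_j y_i : i,j ∈ N_{G∖e}(u) or i,j ∈ N_{G∖e}(v)). -/
/-!
Swapping `x_i ↔ y_i` for every vertex `i` on the side of `u` in a 2-colouring of `H = G ∖ e`
turns `I_H` into the binomial edge ideal `J_H = (x_i y_j - x_j y_i : ij ∈ E(H))`, fixes the
generators attached to `N_H(u)` and `N_H(v)` (these vertices lie on the other side), and sends
`x_u x_v - y_u y_v` to its negative. So it suffices to show `J_H : (x_u x_v - y_u y_v) = J_{H'}`,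
where `H'` is `H` with cliques added on `N_H(u)` and `N_H(v)`, for any non-adjacent `u`, `v`.

Both ideals are spanned by binomials `x^p - x^q`, so a polynomial lies in one of them iff its
coefficients sum to zero on every class of the congruence on monomials generated by the moves
`x_i y_j ↔ y_i x_j` along edges. Such a class is determined by the degree at each vertex and the
number of `x`'s in each connected component of the graph restricted to the support. Multiplying by
`y_u y_v` adds `u` and `v` to the support, and the components of `H` through `S ∪ {u, v}` meet `S`
exactly in the components of `H'` through `S`; hence `m ↦ y_u y_v m` maps `H'`-classes injectively
to `H`-classes. Multiplication by `x_u x_v` is also well defined on `H'`-classes and raises the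
`x`-degree by two, so a class of minimal `x`-degree shows that `g (x_u x_v - y_u y_v) ∈ J_H` forces
every `H'`-class sum of `g` to vanish.
-/

open MvPolynomial

noncomputable section

theorem Finsupp.exists_eq_add_single_of_ne_zero {σ : Type*} {α : σ →₀ ℕ} {s : σ} (h : α s ≠ 0) :
    ∃ γ, α = γ + Finsupp.single s 1 := by
  obtain ⟨γ, hγ⟩ := exists_add_of_le (Finsupp.single_le_iff.mpr (Nat.one_le_iff_ne_zero.mpr h))
  exact ⟨γ, hγ.trans (add_comm _ _)⟩

theorem Finsupp.eq_zero_of_mapDomain_eq {α β M : Type*} [AddCommMonoid M] {f g : α → β}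
    (hf : Function.Injective f) (δ : β → ℕ) (hδ : ∀ a, δ (f a) < δ (g a)) {x : α →₀ M}
    (h : mapDomain f x = mapDomain g x) : x = 0 := by
  classical
  by_contra hx
  obtain ⟨a, ha, hmin⟩ := x.support.exists_min_image (δ ∘ f) (support_nonempty_iff.mpr hx)
  have hfa : f a ∉ (mapDomain g x).support := fun hmem => by
    obtain ⟨b, hb, hgb⟩ := Finset.mem_image.mp (mapDomain_support hmem)
    have h1 : δ (f a) ≤ δ (f b) := hmin b hb
    have h2 := hδ b
    rw [hgb] at h2
    omega
  rw [mem_support_iff] at ha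
  rw [← h, mem_support_iff, mapDomain_apply hf] at hfa
  exact hfa ha

theorem AddCon.apply_eq_of_addConGen {M β : Type*} [AddCommMonoid M] {R : M → M → Prop}
    {f : M → β} (hf : ∀ γ p q, R p q → f (γ + p) = f (γ + q)) {a b : M}
    (h : addConGen R a b) : f a = f b := by
  let c : AddCon M :=
    { r a b := ∀ γ, f (γ + a) = f (γ + b)
      iseqv := ⟨fun _ _ => rfl, fun h γ => (h γ).symm, fun h h' γ => (h γ).trans (h' γ)⟩
      add' {a b c d} h h' γ := by
        calc f (γ + (a + c)) = f ((γ + c) + a) := by rw [add_comm a, add_assoc]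
          _ = f ((γ + c) + b) := h _
          _ = f ((γ + b) + c) := by rw [add_right_comm]
          _ = f ((γ + b) + d) := h' _
          _ = f (γ + (b + d)) := by rw [add_assoc] }
  simpa using (AddCon.addConGen_le (c := c)).mpr (fun p q hpq γ => hf γ p q hpq) h 0

theorem Ideal.map_colon_singleton {R S : Type*} [CommRing R] [CommRing S] (e : R ≃+* S)
    (I : Ideal R) (x : R) : (I.colon {x}).map e = (I.map e).colon {e x} := by
  ext y
  rw [← Ideal.comap_symm, ← Ideal.comap_symm, Ideal.mem_comap, Submodule.mem_colon_singleton,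
    Submodule.mem_colon_singleton, Ideal.mem_comap, smul_eq_mul, smul_eq_mul, map_mul,
    RingEquiv.symm_apply_apply]

theorem Ideal.colon_neg_singleton {R : Type*} [CommRing R] (I : Ideal R) (x : R) :
    I.colon {-x} = I.colon {x} := by
  rw [← Ideal.colon_span, Ideal.span_singleton_neg, Ideal.colon_span]

section BinomialIdeal

variable {σ : Type*} (K : Type*) [CommRing K]

def binomialIdeal (R : (σ →₀ ℕ) → (σ →₀ ℕ) → Prop) : Ideal (MvPolynomial σ K) :=
  Ideal.span {f | ∃ p q, R p q ∧ f = monomial p 1 - monomial q 1}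

def Ideal.binomialCon (I : Ideal (MvPolynomial σ K)) : AddCon (σ →₀ ℕ) where
  r a b := monomial a (1 : K) - monomial b 1 ∈ I
  iseqv :=
    { refl a := by simp
      symm h := by simpa using I.neg_mem h
      trans h h' := by simpa using I.add_mem h h' }
  add' {a b c d} h h' := by
    have : monomial (a + c) (1 : K) - monomial (b + d) 1 =
        monomial c 1 * (monomial a 1 - monomial b 1) +
          monomial b 1 * (monomial c 1 - monomial d 1) := by
      simp only [mul_sub, monomial_mul, one_mul]; rw [add_comm c a, add_comm c b]; ring
    simpa [this] using I.add_mem (I.mul_mem_left _ h) (I.mul_mem_left _ h')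

variable {K}

theorem monomial_sub_mem_binomialIdeal {R : (σ →₀ ℕ) → (σ →₀ ℕ) → Prop} {a b : σ →₀ ℕ}
    (h : addConGen R a b) (r : K) : monomial a r - monomial b r ∈ binomialIdeal K R := by
  have h1 : monomial a (1 : K) - monomial b 1 ∈ binomialIdeal K R :=
    (AddCon.addConGen_le (c := (binomialIdeal K R).binomialCon K)).mpr
      (fun p q hpq => Ideal.subset_span ⟨p, q, hpq, rfl⟩) h
  simpa [mul_sub, C_mul_monomial] using (binomialIdeal K R).mul_mem_left (C r) h1

variable (K) in
theorem binomialIdeal_eq_ker (R : (σ →₀ ℕ) → (σ →₀ ℕ) → Prop) :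
    binomialIdeal K R = RingHom.ker (AddMonoidAlgebra.mapDomainRingHom K (addConGen R).mk') := by
  set Φ := AddMonoidAlgebra.mapDomainRingHom K (addConGen R).mk'
  refine le_antisymm (Ideal.span_le.mpr ?_) fun g hg => ?_
  · rintro _ ⟨p, q, hpq, rfl⟩
    have : (p : (addConGen R).Quotient) = q := (AddCon.eq _).mpr (.of p q hpq)
    rw [SetLike.mem_coe, RingHom.mem_ker, map_sub, sub_eq_zero]
    simp [Φ, ← single_eq_monomial, this]
  · obtain ⟨rep, hrep⟩ : ∃ rep : (addConGen R).Quotient → σ →₀ ℕ,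
        ∀ a, addConGen R a (rep ((addConGen R).mk' a)) :=
      ⟨Function.surjInv AddCon.mk'_surjective, fun a => (AddCon.eq _).mp
        (Function.surjInv_eq AddCon.mk'_surjective _).symm⟩
    have key : ∀ g : MvPolynomial σ K,
        g - AddMonoidAlgebra.mapDomain rep (Φ g) ∈ binomialIdeal K R := by
      intro g
      induction g using MvPolynomial.induction_on' with
      | monomial a r =>
        simpa [Φ, ← single_eq_monomial] using monomial_sub_mem_binomialIdeal (hrep a) r
      | add p q hp hq =>
        rw [map_add, AddMonoidAlgebra.mapDomain_add, add_sub_add_comm]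
        exact add_mem hp hq
    simpa [RingHom.mem_ker.mp hg, AddMonoidAlgebra.mapDomain_zero] using key g

theorem mapDomain_mul_monomial {P Q : Type*} {f : (σ →₀ ℕ) → Q} {g : (σ →₀ ℕ) → P}
    {φ : P → Q} {m : σ →₀ ℕ} (h : ∀ a, φ (g a) = f (m + a)) (x : MvPolynomial σ K) :
    AddMonoidAlgebra.mapDomain f (x * monomial m 1) =
      AddMonoidAlgebra.mapDomain φ (AddMonoidAlgebra.mapDomain g x) := by
  induction x using MvPolynomial.induction_on' with
  | monomial a r =>
    rw [monomial_mul, mul_one, ← single_eq_monomial, ← single_eq_monomial,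
      AddMonoidAlgebra.mapDomain_single, AddMonoidAlgebra.mapDomain_single,
      AddMonoidAlgebra.mapDomain_single, h, add_comm]
  | add p q hp hq =>
    simp only [add_mul, AddMonoidAlgebra.mapDomain_add, hp, hq]

end BinomialIdeal

section Monomials

variable {V : Type*}

def xExp (i : V) : V ⊕ V →₀ ℕ := Finsupp.single (Sum.inl i) 1

def yExp (i : V) : V ⊕ V →₀ ℕ := Finsupp.single (Sum.inr i) 1

def vertexDeg (α : V ⊕ V →₀ ℕ) (i : V) : ℕ := α (Sum.inl i) + α (Sum.inr i)

@[simp] theorem vertexDeg_add (α β : V ⊕ V →₀ ℕ) :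
    vertexDeg (α + β) = vertexDeg α + vertexDeg β := by
  ext i; simp only [vertexDeg, Finsupp.add_apply, Pi.add_apply]; ring

@[simp] theorem vertexDeg_yExp (i : V) : vertexDeg (yExp i) = vertexDeg (xExp i) := by
  classical
  ext j; by_cases h : j = i <;> simp [vertexDeg, xExp, yExp, Finsupp.single_apply, h, eq_comm]

theorem vertexDeg_xExp_self (i : V) : vertexDeg (xExp i) i = 1 := by
  simp [vertexDeg, xExp]

theorem vertexDeg_xExp_of_ne {i j : V} (h : j ≠ i) : vertexDeg (xExp i) j = 0 := by
  simp [vertexDeg, xExp, Ne.symm h]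

theorem monomial_sub_monomial_eq_X_mul_X_sub (K : Type*) [CommRing K] (i j : V) :
    monomial (xExp i + yExp j) (1 : K) - monomial (yExp i + xExp j) 1 =
      X (Sum.inl i) * X (Sum.inr j) - X (Sum.inl j) * X (Sum.inr i) := by
  rw [add_comm (yExp i)]
  simp [X, xExp, yExp, monomial_mul]

variable [Fintype V]

def xDegOn (C : Set V) (α : V ⊕ V →₀ ℕ) : ℕ := ∑ j, C.indicator (fun j => α (Sum.inl j)) j

@[simp] theorem xDegOn_add (C : Set V) (α β : V ⊕ V →₀ ℕ) :
    xDegOn C (α + β) = xDegOn C α + xDegOn C β := by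
  rw [xDegOn, xDegOn, xDegOn, ← Finset.sum_add_distrib]
  exact Finset.sum_congr rfl fun j _ => congrFun (Set.indicator_add C _ _) j

@[simp] theorem xDegOn_xExp (C : Set V) (i : V) : xDegOn C (xExp i) = C.indicator 1 i := by
  rw [xDegOn, Finset.sum_eq_single i (fun j _ hj => by simp [xExp, Ne.symm hj]) (by simp)]
  by_cases hi : i ∈ C <;> simp [hi, xExp]

@[simp] theorem xDegOn_yExp (C : Set V) (i : V) : xDegOn C (yExp i) = 0 := by
  simp [xDegOn, yExp]

theorem xDegOn_congr {C C' : Set V} {α : V ⊕ V →₀ ℕ}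
    (h : ∀ j, α (Sum.inl j) ≠ 0 → (j ∈ C ↔ j ∈ C')) : xDegOn C α = xDegOn C' α := by
  classical
  refine Finset.sum_congr rfl fun j _ => ?_
  by_cases hj : α (Sum.inl j) = 0
  · simp [Set.indicator_apply, hj]
  · simp [Set.indicator_apply, h j hj]

end Monomials

namespace SimpleGraph

variable {V : Type*}

section Moves

variable (H : SimpleGraph V)

def EdgeMove (p q : V ⊕ V →₀ ℕ) : Prop :=
  ∃ i j, H.Adj i j ∧ p = xExp i + yExp j ∧ q = yExp i + xExp j

abbrev edgeCon : AddCon (V ⊕ V →₀ ℕ) := addConGen H.EdgeMove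

def binomialEdgeIdeal (K : Type*) [CommRing K] : Ideal (MvPolynomial (V ⊕ V) K) :=
  binomialIdeal K H.EdgeMove

def ReachIn (S : Set V) : V → V → Prop :=
  Relation.ReflTransGen fun p q => H.Adj p q ∧ p ∈ S ∧ q ∈ S

def compXDeg [Fintype V] (α : V ⊕ V →₀ ℕ) (i : V) : ℕ :=
  xDegOn {j | H.ReachIn (Function.support (vertexDeg α)) i j} α

def neighborCliques (u v : V) : SimpleGraph V :=
  fromRel fun i j => (H.Adj u i ∧ H.Adj u j) ∨ (H.Adj v i ∧ H.Adj v j)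

end Moves

variable {H : SimpleGraph V}

theorem edgeCon_move {i j : V} (h : H.Adj i j) (γ : V ⊕ V →₀ ℕ) :
    H.edgeCon (γ + xExp i + yExp j) (γ + yExp i + xExp j) := by
  rw [add_assoc, add_assoc]
  exact H.edgeCon.add (H.edgeCon.refl γ) (AddConGen.Rel.of _ _ ⟨i, j, h, rfl, rfl⟩)

theorem vertexDeg_eq_of_edgeCon {α β : V ⊕ V →₀ ℕ} (h : H.edgeCon α β) :
    vertexDeg α = vertexDeg β := by
  refine AddCon.apply_eq_of_addConGen ?_ h
  rintro γ _ _ ⟨i, j, -, rfl, rfl⟩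
  simp [add_comm]

theorem edgeCon_of_reachIn {S : Set V} {w j : V} (h : H.ReachIn S w j) (γ : V ⊕ V →₀ ℕ)
    (hS : S ⊆ Function.support (vertexDeg (γ + xExp w + yExp j))) :
    H.edgeCon (γ + xExp w + yExp j) (γ + yExp w + xExp j) := by
  induction h using Relation.ReflTransGen.head_induction_on generalizing γ with
  | refl => rw [add_right_comm]; exact H.edgeCon.refl _
  | @head w t hwt _ ih =>
    obtain ⟨hadj, -, ht⟩ := hwt
    by_cases htj : t = j
    · subst htj; exact edgeCon_move hadj γ
    -- the next vertex `t` carries a variable of `γ`, which relays the `x` from `w` onwards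
    have hγt : vertexDeg γ t ≠ 0 := by
      simpa [vertexDeg_xExp_of_ne (hadj.ne.symm), vertexDeg_xExp_of_ne htj] using hS ht
    by_cases hx : γ (Sum.inl t) ≠ 0
    · obtain ⟨γ, rfl⟩ : ∃ γ', γ = γ' + xExp t := Finsupp.exists_eq_add_single_of_ne_zero hx
      have h1 := ih (γ + xExp w) (by convert hS using 3; abel)
      have h2 := edgeCon_move hadj (γ + xExp j)
      refine H.edgeCon.trans (?_ : H.edgeCon _ (γ + xExp w + yExp t + xExp j)) ?_
      · convert h1 using 1; abel
      · convert h2 using 1 <;> abel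
    · obtain ⟨γ, rfl⟩ : ∃ γ', γ = γ' + yExp t :=
        Finsupp.exists_eq_add_single_of_ne_zero (by unfold vertexDeg at hγt; omega)
      have hdeg : vertexDeg (γ + yExp w + xExp t + yExp j) =
          vertexDeg (γ + yExp t + xExp w + yExp j) := by
        simp only [vertexDeg_add, vertexDeg_yExp]; abel
      have h1 := edgeCon_move hadj (γ + yExp j)
      have h2 := ih (γ + yExp w) (by rwa [hdeg])
      refine H.edgeCon.trans (?_ : H.edgeCon _ (γ + yExp w + xExp t + yExp j)) ?_
      · convert h1 using 1 <;> abel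
      · convert h2 using 1; abel

theorem ReachIn.eq_of_notMem {S : Set V} {i j : V} (h : H.ReachIn S i j) (hi : i ∉ S) : i = j :=
  h.cases_head.resolve_right fun ⟨_, ⟨_, hi', _⟩, _⟩ => hi hi'

section Invariants

variable [Fintype V]

theorem xDegOn_univ_eq_of_edgeCon {α β : V ⊕ V →₀ ℕ} (h : H.edgeCon α β) :
    xDegOn Set.univ α = xDegOn Set.univ β := by
  refine AddCon.apply_eq_of_addConGen ?_ h
  rintro γ _ _ ⟨i, j, -, rfl, rfl⟩
  simp

theorem compXDeg_eq_of_edgeCon {α β : V ⊕ V →₀ ℕ} (h : H.edgeCon α β) :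
    H.compXDeg α = H.compXDeg β := by
  refine AddCon.apply_eq_of_addConGen ?_ h
  rintro γ _ _ ⟨i, j, hij, rfl, rfl⟩
  have hS : Function.support (vertexDeg (γ + (yExp i + xExp j))) =
      Function.support (vertexDeg (γ + (xExp i + yExp j))) := by simp [add_comm]
  ext k
  simp only [compXDeg, hS, xDegOn_add, xDegOn_xExp, xDegOn_yExp]
  set S := Function.support (vertexDeg (γ + (xExp i + yExp j)))
  have hi : i ∈ S := by simp [S, Function.mem_support, vertexDeg_xExp_self]
  have hj : j ∈ S := by simp [S, Function.mem_support, vertexDeg_xExp_self]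
  have hij' : H.ReachIn S k i ↔ H.ReachIn S k j :=
    ⟨fun h => h.tail ⟨hij, hi, hj⟩, fun h => h.tail ⟨hij.symm, hj, hi⟩⟩
  simp only [add_zero, zero_add, add_right_inj]
  classical
  simp [Set.indicator_apply, hij']

theorem compXDeg_of_notMem {α : V ⊕ V →₀ ℕ} {i : V}
    (hi : i ∉ Function.support (vertexDeg α)) : H.compXDeg α i = 0 := by
  have : H.compXDeg α i = xDegOn ∅ α := by
    refine xDegOn_congr fun j hj => iff_of_false (fun hij => ?_) id
    obtain rfl := ReachIn.eq_of_notMem hij hi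
    exact hi (by simp [vertexDeg, hj])
  rw [this]; simp [xDegOn]

theorem exists_reachIn_lt {α β : V ⊕ V →₀ ℕ} (hd : vertexDeg α = vertexDeg β)
    (hc : H.compXDeg α = H.compXDeg β) {w : V} (hw : β (Sum.inl w) < α (Sum.inl w)) :
    ∃ j, H.ReachIn (Function.support (vertexDeg α)) w j ∧ α (Sum.inl j) < β (Sum.inl j) := by
  by_contra! hle
  have hcw := congrFun hc w
  simp only [compXDeg, ← hd, xDegOn] at hcw
  refine hcw.not_gt (Finset.sum_lt_sum (fun j _ => ?_) ⟨w, Finset.mem_univ _, ?_⟩)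
  · by_cases hj : H.ReachIn (Function.support (vertexDeg α)) w j
    · simpa [Set.indicator_of_mem, hj] using hle j hj
    · simp [Set.indicator_of_notMem, hj]
  · have hw' : w ∈ {j | H.ReachIn (Function.support (vertexDeg α)) w j} := .refl
    simpa [Set.indicator_of_mem hw'] using hw

theorem eq_of_forall_le_of_compXDeg_eq {α β : V ⊕ V →₀ ℕ} (hd : vertexDeg α = vertexDeg β)
    (hc : H.compXDeg α = H.compXDeg β) (hle : ∀ l, α (Sum.inl l) ≤ β (Sum.inl l)) : α = β := by
  have hx : ∀ l, α (Sum.inl l) = β (Sum.inl l) := fun l =>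
    le_antisymm (hle l) (not_lt.mp fun hlt => by
      obtain ⟨w, -, hw⟩ := exists_reachIn_lt hd.symm hc.symm hlt
      exact hw.not_ge (hle w))
  ext (l | l)
  · exact hx l
  · have := congrFun hd l
    have := hx l
    unfold vertexDeg at *
    omega

theorem sum_tsub_lt_of_move {γ β : V ⊕ V →₀ ℕ} {w j : V} (hne : w ≠ j)
    (hw : β (Sum.inl w) < (γ + xExp w + yExp j) (Sum.inl w))
    (hj : (γ + xExp w + yExp j) (Sum.inl j) < β (Sum.inl j)) :
    ∑ l, ((γ + yExp w + xExp j) (Sum.inl l) - β (Sum.inl l)) <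
      ∑ l, ((γ + xExp w + yExp j) (Sum.inl l) - β (Sum.inl l)) := by
  classical
  have hx : ∀ l, (γ + xExp w + yExp j) (Sum.inl l) = γ (Sum.inl l) + if w = l then 1 else 0 := by
    intro l; simp [xExp, yExp, Finsupp.single_apply]
  have hy : ∀ l, (γ + yExp w + xExp j) (Sum.inl l) = γ (Sum.inl l) + if j = l then 1 else 0 := by
    intro l; simp [xExp, yExp, Finsupp.single_apply]
  rw [hx, if_pos rfl] at hw
  rw [hx, if_neg hne] at hj
  refine Finset.sum_lt_sum (fun l _ => ?_) ⟨w, Finset.mem_univ _, ?_⟩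
  · rw [hx, hy]
    split_ifs <;> subst_vars <;> omega
  · rw [hx, hy, if_pos rfl, if_neg hne.symm]
    omega

theorem edgeCon_of_vertexDeg_eq_of_compXDeg_eq {α β : V ⊕ V →₀ ℕ}
    (hd : vertexDeg α = vertexDeg β) (hc : H.compXDeg α = H.compXDeg β) : H.edgeCon α β := by
  -- induction on the excess of `x`'s of `α` over `β`; an excess `x` at `w` is walked to a vertex
  -- `j` of its component where `α` has too few `x`'s
  induction hN : ∑ l, (α (Sum.inl l) - β (Sum.inl l)) using Nat.strong_induction_on
    generalizing α with
  | _ N ih =>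
  by_cases hex : ∃ w, β (Sum.inl w) < α (Sum.inl w)
  · obtain ⟨w, hw⟩ := hex
    obtain ⟨j, hwj, hj⟩ := exists_reachIn_lt hd hc hw
    have hne : w ≠ j := by rintro rfl; omega
    obtain ⟨α, rfl⟩ : ∃ α', α = α' + xExp w :=
      Finsupp.exists_eq_add_single_of_ne_zero (by omega)
    obtain ⟨γ, rfl⟩ : ∃ γ, α = γ + yExp j := by
      refine Finsupp.exists_eq_add_single_of_ne_zero ?_
      have := congrFun hd j
      simp [vertexDeg, xExp, hne] at this hj ⊢
      omega
    rw [add_right_comm] at hd hc hN hw hj hwj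
    have hmove := edgeCon_of_reachIn hwj γ subset_rfl
    rw [add_right_comm]
    exact H.edgeCon.trans hmove (ih _ (hN ▸ sum_tsub_lt_of_move hne hw hj)
      ((vertexDeg_eq_of_edgeCon hmove).symm.trans hd)
      ((compXDeg_eq_of_edgeCon hmove).symm.trans hc) rfl)
  · simp only [not_exists, not_lt] at hex
    rw [eq_of_forall_le_of_compXDeg_eq hd hc hex]
    exact H.edgeCon.refl β

end Invariants

section NeighborCliques

variable {u v : V}

theorem edgeCon_add_of_adj_of_adj {m : V ⊕ V →₀ ℕ} {w i j : V} (hw : vertexDeg m w ≠ 0)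
    (hi : H.Adj w i) (hj : H.Adj w j) :
    H.edgeCon (m + (xExp i + yExp j)) (m + (yExp i + xExp j)) := by
  by_cases hx : m (Sum.inl w) ≠ 0
  · obtain ⟨m, rfl⟩ : ∃ m', m = m' + xExp w := Finsupp.exists_eq_add_single_of_ne_zero hx
    refine H.edgeCon.trans (?_ : H.edgeCon _ (m + xExp i + yExp w + xExp j)) ?_
    · convert edgeCon_move hj (m + xExp i) using 1; abel
    · convert edgeCon_move hi.symm (m + xExp j) using 1 <;> abel
  · obtain ⟨m, rfl⟩ : ∃ m', m = m' + yExp w :=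
      Finsupp.exists_eq_add_single_of_ne_zero (by unfold vertexDeg at hw; omega)
    refine H.edgeCon.trans (?_ : H.edgeCon _ (m + yExp j + yExp i + xExp w)) ?_
    · convert edgeCon_move hi.symm (m + yExp j) using 1; abel
    · convert edgeCon_move hj (m + yExp i) using 1 <;> abel

theorem edgeCon_add_of_edgeCon_sup {m a b : V ⊕ V →₀ ℕ} (hu : vertexDeg m u ≠ 0)
    (hv : vertexDeg m v ≠ 0) (h : (H ⊔ H.neighborCliques u v).edgeCon a b) :
    H.edgeCon (m + a) (m + b) := by
  induction h with
  | of p q hpq =>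
    obtain ⟨i, j, hij | hij, rfl, rfl⟩ := hpq
    · rw [← add_assoc, ← add_assoc]; exact edgeCon_move hij m
    · obtain ⟨-, (⟨hi, hj⟩ | ⟨hi, hj⟩) | (⟨hj, hi⟩ | ⟨hj, hi⟩)⟩ := (fromRel_adj _ _ _).mp hij
      · exact edgeCon_add_of_adj_of_adj hu hi hj
      · exact edgeCon_add_of_adj_of_adj hv hi hj
      · exact edgeCon_add_of_adj_of_adj hu hi hj
      · exact edgeCon_add_of_adj_of_adj hv hi hj
  | refl => exact H.edgeCon.refl _
  | symm _ ih => exact H.edgeCon.symm ih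
  | trans _ _ ih ih' => exact H.edgeCon.trans ih ih'
  | @add w x y z _ _ ih ih' =>
    refine H.edgeCon.trans (?_ : H.edgeCon _ (x + (m + y))) ?_
    · convert H.edgeCon.add ih (H.edgeCon.refl y) using 1 <;> abel
    · convert H.edgeCon.add (H.edgeCon.refl x) ih' using 1; abel

theorem reachIn_insert_of_reachIn_sup {S : Set V} {p q : V}
    (h : (H ⊔ H.neighborCliques u v).ReachIn S p q) : H.ReachIn (insert u (insert v S)) p q := by
  induction h with
  | refl => exact .refl
  | tail _ hst ih =>
    obtain ⟨hst | hst, hs, ht⟩ := hst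
    · exact ih.tail ⟨hst, .inr (.inr hs), .inr (.inr ht)⟩
    · obtain ⟨-, (⟨hs', ht'⟩ | ⟨hs', ht'⟩) | (⟨ht', hs'⟩ | ⟨ht', hs'⟩)⟩ :=
        (fromRel_adj _ _ _).mp hst
      all_goals first
        | exact (ih.tail ⟨hs'.symm, .inr (.inr hs), .inl rfl⟩).tail ⟨ht', .inl rfl, .inr (.inr ht)⟩
        | exact (ih.tail ⟨hs'.symm, .inr (.inr hs), .inr (.inl rfl)⟩).tail
            ⟨ht', .inr (.inl rfl), .inr (.inr ht)⟩

theorem reachIn_sup_of_reachIn_insert (huv : ¬H.Adj u v) {S : Set V} {p q : V}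
    (h : H.ReachIn (insert u (insert v S)) p q) (hp : p ∈ S) (hq : q ∈ S) :
    (H ⊔ H.neighborCliques u v).ReachIn S p q := by
  -- a visit to `u` or `v` outside `S` sits between two neighbours in `S`, since `u ≁ v`
  suffices ∀ a, H.ReachIn (insert u (insert v S)) a q →
      (a ∈ S → (H ⊔ H.neighborCliques u v).ReachIn S a q) ∧
      (a ∉ S → ∀ s ∈ S, H.Adj a s → (H ⊔ H.neighborCliques u v).ReachIn S s q) from
    (this p h).1 hp
  intro a ha
  induction ha using Relation.ReflTransGen.head_induction_on with
  | refl => exact ⟨fun _ => .refl, fun hq' => absurd hq hq'⟩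
  | @head a t hat _ ih =>
    obtain ⟨hadj, ha, ht⟩ := hat
    have hclique : ∀ s ∈ S, a ∉ S → H.Adj a s → t ∈ S → s ≠ t →
        (H ⊔ H.neighborCliques u v).Adj s t := by
      intro s _ haS hs _ hst
      refine Or.inr ((fromRel_adj _ _ _).mpr ⟨hst, Or.inl ?_⟩)
      rcases ha with rfl | rfl | ha
      · exact Or.inl ⟨hs, hadj⟩
      · exact Or.inr ⟨hs, hadj⟩
      · exact absurd ha haS
    constructor
    · intro haS
      by_cases htS : t ∈ S
      · exact Relation.ReflTransGen.head ⟨Or.inl hadj, haS, htS⟩ (ih.1 htS)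
      · exact ih.2 htS a haS hadj.symm
    · intro haS s hs has
      have htS : t ∈ S := by
        by_contra htS
        rcases ha with rfl | rfl | ha <;> rcases ht with rfl | rfl | ht <;>
          first | exact H.irrefl hadj | exact huv hadj | exact huv hadj.symm | contradiction
      by_cases hst : s = t
      · exact hst ▸ ih.1 htS
      · exact Relation.ReflTransGen.head ⟨hclique s hs haS has htS hst, hs, htS⟩ (ih.1 htS)

variable [Fintype V]

theorem compXDeg_sup_eq (huv : ¬H.Adj u v) {a : V ⊕ V →₀ ℕ} {i : V}
    (hi : i ∈ Function.support (vertexDeg a)) :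
    (H ⊔ H.neighborCliques u v).compXDeg a i = H.compXDeg (yExp u + yExp v + a) i := by
  classical
  have hS : Function.support (vertexDeg (yExp u + yExp v + a)) =
      insert u (insert v (Function.support (vertexDeg a))) := by
    ext j
    by_cases hju : j = u <;> by_cases hjv : j = v <;>
      simp [hju, hjv, vertexDeg_xExp_self, vertexDeg_xExp_of_ne]
  unfold compXDeg
  rw [hS, xDegOn_add, xDegOn_add, xDegOn_yExp, xDegOn_yExp, zero_add, zero_add]
  refine xDegOn_congr fun j hj => ?_
  have hjS : j ∈ Function.support (vertexDeg a) := by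
    simp only [Function.mem_support, vertexDeg]; omega
  exact ⟨reachIn_insert_of_reachIn_sup, fun h => reachIn_sup_of_reachIn_insert huv h hi hjS⟩

theorem edgeCon_sup_of_edgeCon_add (huv : ¬H.Adj u v) {a b : V ⊕ V →₀ ℕ}
    (h : H.edgeCon (yExp u + yExp v + a) (yExp u + yExp v + b)) :
    (H ⊔ H.neighborCliques u v).edgeCon a b := by
  have hd : vertexDeg a = vertexDeg b := by simpa using vertexDeg_eq_of_edgeCon h
  have hc := compXDeg_eq_of_edgeCon h
  refine edgeCon_of_vertexDeg_eq_of_compXDeg_eq hd (funext fun i => ?_)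
  by_cases hi : i ∈ Function.support (vertexDeg a)
  · rw [compXDeg_sup_eq huv hi, compXDeg_sup_eq huv (hd ▸ hi), hc]
  · rw [compXDeg_of_notMem hi, compXDeg_of_notMem (hd ▸ hi)]

end NeighborCliques

theorem exists_shift_edgeCon {u v : V} {m : V ⊕ V →₀ ℕ} (hu : vertexDeg m u ≠ 0)
    (hv : vertexDeg m v ≠ 0) :
    ∃ φ : (H ⊔ H.neighborCliques u v).edgeCon.Quotient → H.edgeCon.Quotient,
      ∀ a : V ⊕ V →₀ ℕ, φ a = ((m + a : V ⊕ V →₀ ℕ) : H.edgeCon.Quotient) :=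
  ⟨fun q => q.liftOn (fun a => ((m + a : V ⊕ V →₀ ℕ) : H.edgeCon.Quotient))
    fun _ _ h => (AddCon.eq _).mpr (edgeCon_add_of_edgeCon_sup hu hv h), fun _ => rfl⟩

theorem binomialEdgeIdeal_colon [Fintype V] (K : Type*) [CommRing K] {u v : V}
    (huv : ¬H.Adj u v) :
    (H.binomialEdgeIdeal K).colon
        {X (Sum.inl u) * X (Sum.inl v) - X (Sum.inr u) * X (Sum.inr v)} =
      (H ⊔ H.neighborCliques u v).binomialEdgeIdeal K := by
  have hu : vertexDeg (xExp u + xExp v) u ≠ 0 := by simp [vertexDeg_xExp_self]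
  have hv : vertexDeg (xExp u + xExp v) v ≠ 0 := by simp [vertexDeg_xExp_self]
  obtain ⟨φA, hφA⟩ := exists_shift_edgeCon (H := H) (m := yExp u + yExp v)
    (by simpa using hu) (by simpa using hv)
  obtain ⟨φB, hφB⟩ := exists_shift_edgeCon (H := H) hu hv
  have hinj : Function.Injective φA := by
    intro q₁ q₂
    refine AddCon.induction_on₂ q₁ q₂ fun a b hab => ?_
    rw [hφA, hφA, AddCon.eq] at hab
    exact (AddCon.eq _).mpr (edgeCon_sup_of_edgeCon_add huv hab)
  let δ : H.edgeCon.Quotient → ℕ := fun q =>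
    q.liftOn (xDegOn Set.univ) fun _ _ h => xDegOn_univ_eq_of_edgeCon h
  have hδ : ∀ q, δ (φA q) < δ (φB q) := by
    refine fun q => AddCon.induction_on q fun a => ?_
    rw [hφA, hφB]
    show xDegOn Set.univ (yExp u + yExp v + a) < xDegOn Set.univ (xExp u + xExp v + a)
    simp
  have hf : X (Sum.inl u) * X (Sum.inl v) - X (Sum.inr u) * X (Sum.inr v) =
      monomial (xExp u + xExp v) (1 : K) - monomial (yExp u + yExp v) 1 := by
    simp [X, xExp, yExp, monomial_mul]
  ext g
  rw [Submodule.mem_colon_singleton, smul_eq_mul, hf, binomialEdgeIdeal, binomialEdgeIdeal,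
    binomialIdeal_eq_ker, binomialIdeal_eq_ker, RingHom.mem_ker, RingHom.mem_ker, mul_sub,
    map_sub, sub_eq_zero, AddMonoidAlgebra.mapDomainRingHom_apply,
    AddMonoidAlgebra.mapDomainRingHom_apply, AddMonoidAlgebra.mapDomainRingHom_apply,
    AddCon.coe_mk', AddCon.coe_mk', mapDomain_mul_monomial (φ := φB) (fun a => hφB a),
    mapDomain_mul_monomial (φ := φA) (fun a => hφA a)]
  constructor
  · intro heq
    exact AddMonoidAlgebra.coeff_injective
      (Finsupp.eq_zero_of_mapDomain_eq hinj δ hδ (congrArg AddMonoidAlgebra.coeff heq.symm))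
  · intro h0
    simp [h0]

variable (K : Type*) [CommRing K]

theorem binomialEdgeIdeal_eq_span (H : SimpleGraph V) :
    H.binomialEdgeIdeal K = Ideal.span {f | ∃ i j, H.Adj i j ∧
      f = X (Sum.inl i) * X (Sum.inr j) - X (Sum.inl j) * X (Sum.inr i)} := by
  unfold binomialEdgeIdeal binomialIdeal
  congr 1
  ext f
  constructor
  · rintro ⟨_, _, ⟨i, j, h, rfl, rfl⟩, rfl⟩
    exact ⟨i, j, h, monomial_sub_monomial_eq_X_mul_X_sub K i j⟩
  · rintro ⟨i, j, h, rfl⟩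
    exact ⟨_, _, ⟨i, j, h, rfl, rfl⟩, (monomial_sub_monomial_eq_X_mul_X_sub K i j).symm⟩

theorem binomialEdgeIdeal_fromRel (r : V → V → Prop) :
    (fromRel r).binomialEdgeIdeal K = Ideal.span {f | ∃ i j, r i j ∧
      f = X (Sum.inl i) * X (Sum.inr j) - X (Sum.inl j) * X (Sum.inr i)} := by
  rw [binomialEdgeIdeal_eq_span]
  apply le_antisymm <;> rw [Ideal.span_le]
  · rintro _ ⟨i, j, ⟨-, hij | hji⟩, rfl⟩
    · exact Ideal.subset_span ⟨i, j, hij, rfl⟩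
    · have hmem : X (Sum.inl j) * X (Sum.inr i) - X (Sum.inl i) * X (Sum.inr j) ∈
          Ideal.span {f : MvPolynomial (V ⊕ V) K | ∃ i j, r i j ∧
            f = X (Sum.inl i) * X (Sum.inr j) - X (Sum.inl j) * X (Sum.inr i)} :=
        Ideal.subset_span ⟨j, i, hji, rfl⟩
      simpa using neg_mem hmem
  · rintro _ ⟨i, j, hij, rfl⟩
    by_cases hne : i = j
    · subst hne; simp
    · exact Ideal.subset_span ⟨i, j, (fromRel_adj _ _ _).mpr ⟨hne, .inl hij⟩, rfl⟩

theorem binomialEdgeIdeal_sup (H H' : SimpleGraph V) :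
    (H ⊔ H').binomialEdgeIdeal K = H.binomialEdgeIdeal K ⊔ H'.binomialEdgeIdeal K := by
  simp only [binomialEdgeIdeal_eq_span, ← Ideal.span_union]
  congr 1
  ext f
  simp only [sup_adj, Set.mem_union, Set.mem_ofPred_eq, or_and_right, exists_or]

end SimpleGraph

section SideSwap

variable {V : Type*} (P : V → Prop) [DecidablePred P]

def sideSwap : V ⊕ V → V ⊕ V
  | .inl i => if P i then .inr i else .inl i
  | .inr i => if P i then .inl i else .inr i

theorem sideSwap_involutive : Function.Involutive (sideSwap P) := by
  rintro (i | i) <;> by_cases h : P i <;> simp [sideSwap, h]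

variable (K : Type*) [CommRing K]

def sideSwapEquiv : MvPolynomial (V ⊕ V) K ≃+* MvPolynomial (V ⊕ V) K :=
  (renameEquiv K ((sideSwap_involutive P).toPerm _)).toRingEquiv

variable {P K}

theorem sideSwapEquiv_apply (f : MvPolynomial (V ⊕ V) K) :
    sideSwapEquiv P K f = rename (sideSwap P) f := rfl

theorem sideSwapEquiv_X_mul_X_sub {i j : V} (h : P i ↔ ¬P j) :
    sideSwapEquiv P K (X (Sum.inl i) * X (Sum.inr j) - X (Sum.inl j) * X (Sum.inr i)) =
      if P i then -(X (Sum.inl i) * X (Sum.inl j) - X (Sum.inr i) * X (Sum.inr j))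
      else X (Sum.inl i) * X (Sum.inl j) - X (Sum.inr i) * X (Sum.inr j) := by
  by_cases hi : P i
  · simp [sideSwapEquiv_apply, sideSwap, hi, h.mp hi]; ring
  · simp [sideSwapEquiv_apply, sideSwap, hi, not_not.mp (mt h.mpr hi)]; ring

theorem map_sideSwapEquiv_span_eq_of_forall_not {r : V → V → Prop}
    (hr : ∀ i j, r i j → ¬P i ∧ ¬P j) :
    (Ideal.span {f | ∃ i j, r i j ∧
        f = X (Sum.inl i) * X (Sum.inr j) - X (Sum.inl j) * X (Sum.inr i)}).map
      (sideSwapEquiv P K) =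
    Ideal.span {f | ∃ i j, r i j ∧
        f = X (Sum.inl i) * X (Sum.inr j) - X (Sum.inl j) * X (Sum.inr i)} := by
  rw [Ideal.map_span, Set.EqOn.image_eq_self]
  rintro _ ⟨i, j, hij, rfl⟩
  simp [sideSwapEquiv_apply, sideSwap, hr i j hij]

end SideSwap

theorem map_sideSwapEquiv_binomialEdgeIdeal {V : Type} (K : Type) [Field K] {H : SimpleGraph V}
    {P : V → Prop} [DecidablePred P] (hside : ∀ i j, H.Adj i j → (P i ↔ ¬P j)) :
    (H.binomialEdgeIdeal K).map (sideSwapEquiv P K) = pbei K H := by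
  rw [SimpleGraph.binomialEdgeIdeal_eq_span, Ideal.map_span, pbei]
  apply le_antisymm <;> rw [Ideal.span_le]
  · rintro _ ⟨_, ⟨i, j, h, rfl⟩, rfl⟩
    rw [SetLike.mem_coe, sideSwapEquiv_X_mul_X_sub (hside i j h)]
    split_ifs
    · exact neg_mem (Ideal.subset_span ⟨i, j, h, rfl⟩)
    · exact Ideal.subset_span ⟨i, j, h, rfl⟩
  · rintro _ ⟨i, j, h, rfl⟩
    have hb := Ideal.subset_span (Set.mem_image_of_mem (sideSwapEquiv P K)
      (show _ ∈ {f | ∃ i j, H.Adj i j ∧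
        f = X (Sum.inl i) * X (Sum.inr j) - X (Sum.inl j) * X (Sum.inr i)} from ⟨i, j, h, rfl⟩))
    rw [sideSwapEquiv_X_mul_X_sub (hside i j h)] at hb
    split_ifs at hb
    · simpa using neg_mem hb
    · exact hb

theorem pbei_colon_of_coloring {V : Type} [Fintype V] (K : Type) [Field K] {H : SimpleGraph V}
    (C : H.Coloring (Fin 2)) {u v : V} (hC : C v = C u) :
    (pbei K H).colon
        ((Ideal.span {X (Sum.inl u) * X (Sum.inl v) - X (Sum.inr u) * X (Sum.inr v)} :
          Ideal (MvPolynomial (V ⊕ V) K)) : Set (MvPolynomial (V ⊕ V) K)) =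
      pbei K H ⊔ Ideal.span {f | ∃ i j,
        ((H.Adj u i ∧ H.Adj u j) ∨ (H.Adj v i ∧ H.Adj v j)) ∧
        f = X (Sum.inl i) * X (Sum.inr j) - X (Sum.inl j) * X (Sum.inr i)} := by
  set P : V → Prop := fun i => C i = C u
  have hside : ∀ i j, H.Adj i j → (P i ↔ ¬P j) := by
    intro i j h
    have := C.valid h
    simp only [P, Fin.ext_iff] at this ⊢
    omega
  have hnbr : ∀ i j, (H.Adj u i ∧ H.Adj u j) ∨ (H.Adj v i ∧ H.Adj v j) → ¬P i ∧ ¬P j := by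
    rintro i j (⟨hi, hj⟩ | ⟨hi, hj⟩)
    · exact ⟨(hside u i hi).mp rfl, (hside u j hj).mp rfl⟩
    · exact ⟨(hside v i hi).mp hC, (hside v j hj).mp hC⟩
  have huv : ¬H.Adj u v := fun h => (hside u v h).mp rfl hC
  have hf : sideSwapEquiv P K (X (Sum.inl u) * X (Sum.inl v) - X (Sum.inr u) * X (Sum.inr v)) =
      -(X (Sum.inl u) * X (Sum.inl v) - X (Sum.inr u) * X (Sum.inr v)) := by
    simp [sideSwapEquiv_apply, sideSwap, P, hC]
  rw [Ideal.colon_span, ← map_sideSwapEquiv_binomialEdgeIdeal K hside,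
    ← Ideal.colon_neg_singleton, ← hf, ← Ideal.map_colon_singleton,
    SimpleGraph.binomialEdgeIdeal_colon K huv, SimpleGraph.binomialEdgeIdeal_sup, Ideal.map_sup,
    SimpleGraph.neighborCliques, SimpleGraph.binomialEdgeIdeal_fromRel,
    map_sideSwapEquiv_span_eq_of_forall_not hnbr]

theorem SimpleGraph.nonempty_coloring_of_deleteEdges {V α : Type*} {G : SimpleGraph V} {u v : V}
    (C : (G.deleteEdges {s(u, v)}).Coloring α) (h : C u ≠ C v) : Nonempty (G.Coloring α) := by
  refine ⟨SimpleGraph.Coloring.mk C fun {a b} hab => ?_⟩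
  by_cases hs : s(a, b) = s(u, v)
  · rcases Sym2.eq_iff.mp hs with ⟨rfl, rfl⟩ | ⟨rfl, rfl⟩
    exacts [h, h.symm]
  · exact C.valid (SimpleGraph.deleteEdges_adj.mpr ⟨hab, by simpa using hs⟩)

theorem stmt15_general {n : ℕ} (K : Type) [Field K] (G : SimpleGraph (Fin n))
    (hnb : ¬ G.Colorable 2) (u v : Fin n)
    (hbip : (G.deleteEdges {s(u, v)}).Colorable 2) :
    (pbei K (G.deleteEdges {s(u, v)})).colon
        ((Ideal.span {X (Sum.inl u) * X (Sum.inl v) - X (Sum.inr u) * X (Sum.inr v)} :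
          Ideal (MvPolynomial (Fin n ⊕ Fin n) K)) : Set (MvPolynomial (Fin n ⊕ Fin n) K))
      =
    pbei K (G.deleteEdges {s(u, v)}) ⊔
      Ideal.span {f | ∃ i j,
        (((G.deleteEdges {s(u, v)}).Adj u i ∧ (G.deleteEdges {s(u, v)}).Adj u j) ∨
         ((G.deleteEdges {s(u, v)}).Adj v i ∧ (G.deleteEdges {s(u, v)}).Adj v j)) ∧
        f = X (Sum.inl i) * X (Sum.inr j) - X (Sum.inl j) * X (Sum.inr i)} := by
  obtain ⟨C⟩ := hbip
  have hC : C v = C u := by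
    by_contra hC
    exact hnb (SimpleGraph.nonempty_coloring_of_deleteEdges C (Ne.symm hC))
  exact pbei_colon_of_coloring K C hC

/-- If `G` is non-bipartite and `e = {u,v}` is an edge with `G∖e` bipartite,
then `I_{G∖e} : (x_u x_v − y_u y_v)` equals
`I_{G∖e} + (x_i y_j − x_j y_i : i,j ∈ N_{G∖e}(u) or i,j ∈ N_{G∖e}(v))`. -/
theorem stmt15 {n : ℕ} (K : Type) [Field K] (G : SimpleGraph (Fin n))
    (hnb : ¬ G.Colorable 2) (u v : Fin n) (huv : G.Adj u v)
    (hbip : (G.deleteEdges {s(u, v)}).Colorable 2) :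
    (pbei K (G.deleteEdges {s(u, v)})).colon
        ((Ideal.span {X (Sum.inl u) * X (Sum.inl v) - X (Sum.inr u) * X (Sum.inr v)} :
          Ideal (MvPolynomial (Fin n ⊕ Fin n) K)) : Set (MvPolynomial (Fin n ⊕ Fin n) K))
      =
    pbei K (G.deleteEdges {s(u, v)}) ⊔
      Ideal.span {f | ∃ i j,
        (((G.deleteEdges {s(u, v)}).Adj u i ∧ (G.deleteEdges {s(u, v)}).Adj u j) ∨
         ((G.deleteEdges {s(u, v)}).Adj v i ∧ (G.deleteEdges {s(u, v)}).Adj v j)) ∧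
        f = X (Sum.inl i) * X (Sum.inr j) - X (Sum.inl j) * X (Sum.inr i)} :=
  stmt15_general K G hnb u v hbip
end
end
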